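/- arXiv:1302.5620 — 3 statements merged into one kernel-verified Lean document; each statement's English description precedes it below -/
import Mathlib

section
/- Let d ≥ 1, let {φ_k : k ∈ ℤ} be a Parseval frame for L²(ℝ^d), and let {m_n}_{n=1}^{N} be an admissible collection of functions on ℝ^d. Define ψ_{k,n} = 𝓕⁻¹{m_n · 𝓕φ_k} for k ∈ ℤ and n = 1, …, N. Then {ψ_{k,n}} is again a Parseval frame for L²(ℝ^d): for every f ∈ L²(ℝ^d) one has ∑_{n=1}^{N} ∑_{k∈ℤ} |⟨f, ψ_{k,n}⟩|² = ‖f‖²_{L²(ℝ^d)}, and f = ∑_{n=1}^{N} ∑_{k∈ℤ} ⟨f, ψ_{k,n}⟩ ψ_{k,n} with convergence in L²(ℝ^d). -/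
/-!
Put `θₙ := 𝓕⁻¹ ∘ M_{conj mₙ} ∘ 𝓕`. Since `𝓕` is unitary, `⟪ψ_{k,n}, f⟫ = ⟪φ_k, θₙ f⟫`, and
`∑ₙ ‖θₙ f‖² = ‖f‖²` because `∑ₙ |mₙ|² = 1` off the null set `{0}`; so the frame identity for
`{ψ_{k,n}}` is that of `{φ_k}` applied to each `θₙ f`. Reconstruction holds for any Parseval
frame: the analysis operator is an isometry into `ℓ²`, so its adjoint, the synthesis operator
`c ↦ ∑ cᵢ Ψᵢ`, is a left inverse of it.
-/

open MeasureTheory FourierTransform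
open scoped ComplexInnerProductSpace

noncomputable section

open scoped InnerProductSpace lp

section ParsevalFrame

variable (𝕜 : Type*) {E ι : Type*} [RCLike 𝕜] [NormedAddCommGroup E] [InnerProductSpace 𝕜 E]

def IsParsevalFrame (Ψ : ι → E) : Prop :=
  ∀ x, HasSum (fun i => ‖⟪Ψ i, x⟫_𝕜‖ ^ 2) (‖x‖ ^ 2)

variable {𝕜}

theorem isParsevalFrame_of_tsum_eq {Ψ : ι → E}
    (h : ∀ x, ∑' i, ‖⟪Ψ i, x⟫_𝕜‖ ^ 2 = ‖x‖ ^ 2) : IsParsevalFrame 𝕜 Ψ := by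
  intro x
  by_cases hx : x = 0
  · subst hx; simp [hasSum_zero]
  · refine h x ▸ Summable.hasSum ?_
    by_contra hs
    exact hx (by simpa [tsum_eq_zero_of_not_summable hs] using (h x).symm)

namespace IsParsevalFrame

variable {Ψ : ι → E} (hΨ : IsParsevalFrame 𝕜 Ψ)
include hΨ

theorem memℓp_inner (x : E) : Memℓp (fun i => ⟪Ψ i, x⟫_𝕜) 2 :=
  memℓp_gen (by simpa only [ENNReal.toReal_ofNat, Real.rpow_ofNat] using (hΨ x).summable)

def analysis : E →ₗᵢ[𝕜] ℓ²(ι, 𝕜) where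
  toFun x := ⟨_, hΨ.memℓp_inner x⟩
  map_add' x y := by ext i; exact inner_add_right _ _ _
  map_smul' c x := by ext i; exact inner_smul_right _ _ _
  norm_map' x := by
    have h := lp.norm_rpow_eq_tsum (by norm_num) (⟨_, hΨ.memℓp_inner x⟩ : ℓ²(ι, 𝕜))
    simp only [ENNReal.toReal_ofNat, Real.rpow_two] at h
    exact (sq_eq_sq₀ (norm_nonneg _) (norm_nonneg _)).1 (h.trans (hΨ x).tsum_eq)

theorem analysis_apply (x : E) (i : ι) : hΨ.analysis x i = ⟪Ψ i, x⟫_𝕜 := rfl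

theorem adjoint_analysis_single [CompleteSpace E] [DecidableEq ι] (i : ι) (c : 𝕜) :
    ContinuousLinearMap.adjoint hΨ.analysis.toContinuousLinearMap (lp.single 2 i c) = c • Ψ i := by
  refine ext_inner_left 𝕜 fun x => ?_
  rw [ContinuousLinearMap.adjoint_inner_right, lp.inner_single_right, inner_smul_right]
  simp [analysis_apply, inner_conj_symm]

theorem hasSum_inner_smul [CompleteSpace E] (x : E) : HasSum (fun i => ⟪Ψ i, x⟫_𝕜 • Ψ i) x := by
  classical
  have hA : ContinuousLinearMap.adjoint hΨ.analysis.toContinuousLinearMap (hΨ.analysis x) = x := by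
    have := (ContinuousLinearMap.isometry_iff_adjoint_comp_self
      hΨ.analysis.toContinuousLinearMap).1 hΨ.analysis.isometry
    simpa only [ContinuousLinearMap.comp_apply, one_apply_eq_self,
      LinearIsometry.coe_toContinuousLinearMap] using
      DFunLike.congr_fun this x
  have := (lp.hasSum_single (p := 2) (by norm_num) (hΨ.analysis x)).mapL
    (ContinuousLinearMap.adjoint hΨ.analysis.toContinuousLinearMap)
  rw [hA] at this
  simpa [adjoint_analysis_single, analysis_apply] using this

theorem of_inner_eq {κ : Type*} [Fintype κ] (θ : κ → E → E)
    (hθ : ∀ x, ∑ n, ‖θ n x‖ ^ 2 = ‖x‖ ^ 2) {ψ : κ × ι → E}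
    (hψ : ∀ p x, ⟪ψ p, x⟫_𝕜 = ⟪Ψ p.2, θ p.1 x⟫_𝕜) : IsParsevalFrame 𝕜 ψ := by
  intro x
  have hfiber : ∀ n, HasSum (fun k => ‖⟪ψ (n, k), x⟫_𝕜‖ ^ 2) (‖θ n x‖ ^ 2) := fun n => by
    simpa only [hψ] using hΨ (θ n x)
  have hs : Summable fun p : κ × ι => ‖⟪ψ p, x⟫_𝕜‖ ^ 2 :=
    (summable_prod_of_nonneg fun _ => by positivity).2
      ⟨fun n => (hfiber n).summable, .of_finite⟩
  rw [← hθ x, ← (hs.hasSum.prod_fiberwise hfiber).unique (hasSum_fintype _)]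
  exact hs.hasSum

end IsParsevalFrame

theorem HasSum.sum_tsum_prod_eq {κ ι α : Type*} [Fintype κ] [AddCommGroup α] [UniformSpace α]
    [IsUniformAddGroup α] [CompleteSpace α] [T2Space α] {f : κ × ι → α} {a : α}
    (h : HasSum f a) : ∑ n, ∑' k, f (n, k) = a := by
  rw [← h.tsum_eq, h.summable.tsum_prod' h.summable.prod_factor, tsum_fintype]

end ParsevalFrame

section Multiplier

variable {𝕜 α : Type*} [RCLike 𝕜] [MeasurableSpace α] {μ : Measure α}

open ComplexConjugate

theorem L2.inner_eq_of_ae_eq_mul {a : α → 𝕜} {f g u v : Lp 𝕜 2 μ}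
    (hu : u =ᵐ[μ] fun ω => a ω * f ω) (hv : v =ᵐ[μ] fun ω => conj (a ω) * g ω) :
    ⟪u, g⟫_𝕜 = ⟪f, v⟫_𝕜 := by
  rw [L2.inner_def, L2.inner_def]
  refine integral_congr_ae ?_
  filter_upwards [hu, hv] with ω hu hv
  simp only [RCLike.inner_apply, hu, hv, map_mul]
  ring

theorem L2.sum_norm_sq_eq_of_ae_eq_mul {κ : Type*} [Fintype κ] {a : κ → α → 𝕜} {g : Lp 𝕜 2 μ}
    {u : κ → Lp 𝕜 2 μ} (hu : ∀ n, u n =ᵐ[μ] fun ω => a n ω * g ω)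
    (ha : ∀ᵐ ω ∂μ, ∑ n, ‖a n ω‖ ^ 2 = 1) : ∑ n, ‖u n‖ ^ 2 = ‖g‖ ^ 2 := by
  apply (RCLike.ofReal_injective (K := 𝕜))
  push_cast
  simp only [← inner_self_eq_norm_sq_to_K, L2.inner_def]
  rw [← integral_finsetSum _ fun n _ => L2.integrable_inner (u n) (u n)]
  refine integral_congr_ae ?_
  filter_upwards [ha, ae_all_iff.2 hu] with ω ha hu
  have hpoint : ∀ n, ⟪u n ω, u n ω⟫_𝕜 = (‖a n ω‖ : 𝕜) ^ 2 * ⟪g ω, g ω⟫_𝕜 := fun n => by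
    simp only [RCLike.inner_apply, hu n, map_mul, ← RCLike.conj_mul]
    ring
  have ha' : ∑ n, (‖a n ω‖ : 𝕜) ^ 2 = 1 := by exact_mod_cast ha
  rw [Finset.sum_congr rfl fun n _ => hpoint n, ← Finset.sum_mul, ha', one_mul]

theorem IsParsevalFrame.of_multiplier {ι κ : Type*} [Fintype κ] (F : Lp 𝕜 2 μ ≃ₗᵢ[𝕜] Lp 𝕜 2 μ)
    {m : κ → α → 𝕜} (hm : ∀ n, AEStronglyMeasurable (m n) μ)
    (hpart : ∀ᵐ ω ∂μ, ∑ n, ‖m n ω‖ ^ 2 = 1) {φ : ι → Lp 𝕜 2 μ} (hφ : IsParsevalFrame 𝕜 φ)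
    {ψ : κ × ι → Lp 𝕜 2 μ} (hψ : ∀ p, F (ψ p) =ᵐ[μ] fun ω => m p.1 ω * F (φ p.2) ω) :
    IsParsevalFrame 𝕜 ψ := by
  have hbound : ∀ n, ∀ᵐ ω ∂μ, ‖conj (m n ω)‖ ≤ 1 := fun n => by
    filter_upwards [hpart] with ω hω
    rw [RCLike.norm_conj, ← sq_le_one_iff₀ (norm_nonneg _), ← hω]
    exact Finset.single_le_sum (f := fun n => ‖m n ω‖ ^ 2) (fun _ _ => by positivity)
      (Finset.mem_univ n)
  have hmem : ∀ n (g : Lp 𝕜 2 μ), MemLp (fun ω => conj (m n ω) * F g ω) 2 μ := fun n g =>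
    (Lp.memLp (F g)).mul' (memLp_top_of_bound (hm n).star 1 (hbound n))
  let θ : κ → Lp 𝕜 2 μ → Lp 𝕜 2 μ := fun n g => F.symm ((hmem n g).toLp _)
  have hθ : ∀ n g, F (θ n g) =ᵐ[μ] fun ω => conj (m n ω) * F g ω := fun n g => by
    simpa only [θ, LinearIsometryEquiv.apply_symm_apply] using (hmem n g).coeFn_toLp
  refine hφ.of_inner_eq θ (fun g => ?_) (fun p g => ?_)
  · simp only [← F.norm_map (θ _ g), ← F.norm_map g]
    exact L2.sum_norm_sq_eq_of_ae_eq_mul (hθ · g) (by simpa only [RCLike.norm_conj] using hpart)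
  · rw [← F.inner_map_map, ← F.inner_map_map (φ p.2)]
    exact L2.inner_eq_of_ae_eq_mul (hψ p) (hθ p.1 g)

end Multiplier

theorem multiplier_transform_of_parseval_frame_general (d N : ℕ) (hd : 1 ≤ d)
    (m : Fin N → EuclideanSpace ℝ (Fin d) → ℂ)
    (hmeas : ∀ n, Measurable (m n))
    (hpart : ∀ ω : EuclideanSpace ℝ (Fin d), ω ≠ 0 → ∑ n, ‖m n ω‖ ^ 2 = 1)
    (F : Lp ℂ 2 (volume : Measure (EuclideanSpace ℝ (Fin d))) ≃ₗᵢ[ℂ]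
         Lp ℂ 2 (volume : Measure (EuclideanSpace ℝ (Fin d))))
    (φ : ℤ → Lp ℂ 2 (volume : Measure (EuclideanSpace ℝ (Fin d))))
    (hφ : ∀ f : Lp ℂ 2 (volume : Measure (EuclideanSpace ℝ (Fin d))),
      ∑' k : ℤ, ‖⟪φ k, f⟫‖ ^ 2 = ‖f‖ ^ 2)
    (ψ : ℤ → Fin N → Lp ℂ 2 (volume : Measure (EuclideanSpace ℝ (Fin d))))
    (hψ : ∀ (k : ℤ) (n : Fin N),
      (F (ψ k n) : EuclideanSpace ℝ (Fin d) → ℂ)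
        =ᵐ[volume] fun ω => m n ω * (F (φ k) : EuclideanSpace ℝ (Fin d) → ℂ) ω)
    (f : Lp ℂ 2 (volume : Measure (EuclideanSpace ℝ (Fin d)))) :
    (∑ n : Fin N, ∑' k : ℤ, ‖⟪ψ k n, f⟫‖ ^ 2 = ‖f‖ ^ 2) ∧
      f = ∑ n : Fin N, ∑' k : ℤ, ⟪ψ k n, f⟫ • ψ k n := by
  have : Nonempty (Fin d) := ⟨⟨0, hd⟩⟩
  have hne : ∀ᵐ ω ∂(volume : Measure (EuclideanSpace ℝ (Fin d))), ω ≠ 0 :=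
    compl_mem_ae_iff.2 (measure_singleton 0)
  have hΨ : IsParsevalFrame ℂ fun p : Fin N × ℤ => ψ p.2 p.1 :=
    (isParsevalFrame_of_tsum_eq hφ).of_multiplier F (fun n => (hmeas n).aestronglyMeasurable)
      (hne.mono hpart) fun p => hψ p.2 p.1
  exact ⟨(hΨ f).sum_tsum_prod_eq, (hΨ.hasSum_inner_smul f).sum_tsum_prod_eq.symm⟩

/-- If `{φ k}` is a Parseval frame for `L²(ℝᵈ)` and `{m n}` is an admissible
collection, then the family `ψ k n = 𝓕⁻¹{m_n ⬝ 𝓕 φ_k}` (characterized here by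
`F (ψ k n) = m n ⬝ F (φ k)` a.e., where `F` is the Plancherel extension to `L²` of the
Fourier transform) is again a Parseval frame for `L²(ℝᵈ)`: the frame-norm identity holds
and every `f` is reproduced by its frame expansion (with convergence in `L²`). -/
theorem multiplier_transform_of_parseval_frame (d N : ℕ) (hd : 1 ≤ d)
    (m : Fin N → EuclideanSpace ℝ (Fin d) → ℂ)
    (hmeas : ∀ n, Measurable (m n))
    (hhom : ∀ n (a : ℝ), 0 < a → ∀ ω : EuclideanSpace ℝ (Fin d), ω ≠ 0 →
      m n (a • ω) = m n ω)
    (hpart : ∀ ω : EuclideanSpace ℝ (Fin d), ω ≠ 0 → ∑ n, ‖m n ω‖ ^ 2 = 1)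
    (F : Lp ℂ 2 (volume : Measure (EuclideanSpace ℝ (Fin d))) ≃ₗᵢ[ℂ]
         Lp ℂ 2 (volume : Measure (EuclideanSpace ℝ (Fin d))))
    (hF : ∀ f : Lp ℂ 2 (volume : Measure (EuclideanSpace ℝ (Fin d))),
      Integrable f volume →
        (F f : EuclideanSpace ℝ (Fin d) → ℂ)
          =ᵐ[volume] 𝓕 (f : EuclideanSpace ℝ (Fin d) → ℂ))
    (hFinv : ∀ f : Lp ℂ 2 (volume : Measure (EuclideanSpace ℝ (Fin d))),
      Integrable f volume →
        (F.symm f : EuclideanSpace ℝ (Fin d) → ℂ)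
          =ᵐ[volume] 𝓕⁻ (f : EuclideanSpace ℝ (Fin d) → ℂ))
    (φ : ℤ → Lp ℂ 2 (volume : Measure (EuclideanSpace ℝ (Fin d))))
    (hφ : ∀ f : Lp ℂ 2 (volume : Measure (EuclideanSpace ℝ (Fin d))),
      ∑' k : ℤ, ‖⟪φ k, f⟫‖ ^ 2 = ‖f‖ ^ 2)
    (ψ : ℤ → Fin N → Lp ℂ 2 (volume : Measure (EuclideanSpace ℝ (Fin d))))
    (hψ : ∀ (k : ℤ) (n : Fin N),
      (F (ψ k n) : EuclideanSpace ℝ (Fin d) → ℂ)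
        =ᵐ[volume] fun ω => m n ω * (F (φ k) : EuclideanSpace ℝ (Fin d) → ℂ) ω)
    (f : Lp ℂ 2 (volume : Measure (EuclideanSpace ℝ (Fin d)))) :
    (∑ n : Fin N, ∑' k : ℤ, ‖⟪ψ k n, f⟫‖ ^ 2 = ‖f‖ ^ 2) ∧
      f = ∑ n : Fin N, ∑' k : ℤ, ⟪ψ k n, f⟫ • ψ k n :=
  multiplier_transform_of_parseval_frame_general d N hd m hmeas hpart F φ hφ ψ hψ f
end
end

section
/- Let d ≥ 1 and ℓ ≥ 0. The real vector space of harmonic homogeneous polynomials of degree ℓ in d real variables has dimension N(d,ℓ) = C(d+ℓ−1, ℓ) − C(d+ℓ−3, ℓ−2), where C(·,·) denotes the binomial coefficient and the second term is interpreted as 0 when ℓ < 2. -/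
open MvPolynomial

noncomputable section

/-- The Laplacian `Δ = ∑ i ∂²/∂xᵢ²` as a linear map on polynomials in `d` variables. -/
def polyLaplacian (d : ℕ) :
    MvPolynomial (Fin d) ℝ →ₗ[ℝ] MvPolynomial (Fin d) ℝ :=
  ∑ i : Fin d, ((pderiv i).toLinearMap ∘ₗ (pderiv i).toLinearMap)

/-- The space of harmonic homogeneous polynomials of degree `ℓ` in `d` real variables. -/
def harmonicHomogeneous (d ℓ : ℕ) : Submodule ℝ (MvPolynomial (Fin d) ℝ) :=
  homogeneousSubmodule (Fin d) ℝ ℓ ⊓ LinearMap.ker (polyLaplacian d)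

section Aux

lemma polyLaplacian_apply {d : ℕ} (f : MvPolynomial (Fin d) ℝ) :
    polyLaplacian d f = ∑ i : Fin d, pderiv i (pderiv i f) := by
  simp [polyLaplacian]

lemma degree_eq_sum_univ {d : ℕ} (s : Fin d →₀ ℕ) : s.degree = ∑ i : Fin d, s i :=
  Finset.sum_subset (Finset.subset_univ _) (fun i _ hi => Finsupp.notMem_support_iff.mp hi)

lemma euler_monomial {d : ℕ} (s : Fin d →₀ ℕ) (a : ℝ) :
    ∑ i : Fin d, X i * pderiv i (monomial s a)
      = s.degree • (monomial s a : MvPolynomial (Fin d) ℝ) := by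
  rw [degree_eq_sum_univ, Finset.sum_smul]
  refine Finset.sum_congr rfl fun i _ => ?_
  rw [pderiv_monomial]
  rcases Nat.eq_zero_or_pos (s i) with h | h
  · simp [h]
  · rw [X, monomial_mul, one_mul]
    have h1 : Finsupp.single i 1 ≤ s := by
      rwa [Finsupp.single_le_iff]
    rw [add_tsub_cancel_of_le h1]
    rw [smul_monomial, nsmul_eq_mul, mul_comm]

lemma euler {d n : ℕ} {f : MvPolynomial (Fin d) ℝ} (hf : f.IsHomogeneous n) :
    ∑ i : Fin d, X i * pderiv i f = n • f := by
  conv_lhs => rw [f.as_sum]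
  conv_rhs => rw [f.as_sum]
  rw [Finset.smul_sum]
  simp_rw [map_sum, Finset.mul_sum]
  rw [Finset.sum_comm]
  refine Finset.sum_congr rfl fun s hs => ?_
  rw [euler_monomial]
  congr 1
  have := hf (MvPolynomial.mem_support_iff.mp hs)
  rw [Finsupp.degree_eq_weight_one]
  exact this

lemma isHomogeneous_pderiv {d n : ℕ} {f : MvPolynomial (Fin d) ℝ} (hf : f.IsHomogeneous n)
    (i : Fin d) : (pderiv i f).IsHomogeneous (n - 1) := by
  conv_lhs => rw [f.as_sum]
  rw [map_sum]
  refine IsHomogeneous.sum _ _ _ fun s hs => ?_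
  rw [pderiv_monomial]
  have hsd : s.degree = n := by
    have := hf (MvPolynomial.mem_support_iff.mp hs)
    rw [Finsupp.degree_eq_weight_one]; exact this
  rcases Nat.eq_zero_or_pos (s i) with h | h
  · simp only [h, Nat.cast_zero, mul_zero, map_zero]
    exact isHomogeneous_zero _ _ _
  · refine isHomogeneous_monomial _ ?_
    have h1 : Finsupp.single i 1 ≤ s := by rwa [Finsupp.single_le_iff]
    have e1 : ∀ t : Fin d →₀ ℕ, t.degree = ∑ j : Fin d, t j := fun t =>
      Finset.sum_subset (Finset.subset_univ _) (fun j _ hj => Finsupp.notMem_support_iff.mp hj)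
    have : (s - Finsupp.single i 1).degree + 1 = s.degree := by
      rw [e1, e1]
      have key : ∀ j : Fin d, ((s - Finsupp.single i 1 : Fin d →₀ ℕ)) j
          = s j - (Finsupp.single i 1) j :=
        fun j => Finsupp.tsub_apply s (Finsupp.single i 1) j
      rw [← Finset.sum_erase_add _ _ (Finset.mem_univ i),
        ← Finset.sum_erase_add _ _ (Finset.mem_univ i)]
      have h2 : ∀ j ∈ Finset.univ.erase i, ((s - Finsupp.single i 1 : Fin d →₀ ℕ)) j = s j := by
        intro j hj
        rw [key, Finsupp.single_apply, if_neg (Finset.ne_of_mem_erase hj).symm, Nat.sub_zero]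
      rw [Finset.sum_congr rfl h2, key i, Finsupp.single_apply, if_pos rfl,
        show (Finset.univ.erase i).sum ⇑s = ∑ x ∈ Finset.univ.erase i, s x from rfl]
      omega
    omega

lemma isHomogeneous_polyLaplacian {d n : ℕ} {f : MvPolynomial (Fin d) ℝ}
    (hf : f.IsHomogeneous n) : (polyLaplacian d f).IsHomogeneous (n - 2) := by
  rw [polyLaplacian_apply]
  refine IsHomogeneous.sum _ _ _ fun i _ => ?_
  have h2 := isHomogeneous_pderiv (isHomogeneous_pderiv hf i) i
  have : n - 1 - 1 = n - 2 := by omega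
  rwa [this] at h2

lemma pderiv_eq_zero_of_isHomogeneous_zero {d : ℕ} {f : MvPolynomial (Fin d) ℝ}
    (hf : f.IsHomogeneous 0) (i : Fin d) : pderiv i f = 0 := by
  conv_lhs => rw [f.as_sum]
  rw [map_sum]
  refine Finset.sum_eq_zero fun s hs => ?_
  have hsd : s.degree = 0 := by
    have := hf (MvPolynomial.mem_support_iff.mp hs)
    rw [Finsupp.degree_eq_weight_one]; exact this
  rw [Finsupp.degree_eq_zero_iff] at hsd
  subst hsd
  rw [show (monomial (0 : Fin d →₀ ℕ)) (coeff 0 f) = C (coeff 0 f) from rfl, pderiv_C]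

lemma polyLaplacian_eq_zero_of_le_one {d n : ℕ} {f : MvPolynomial (Fin d) ℝ}
    (hf : f.IsHomogeneous n) (hn : n ≤ 1) : polyLaplacian d f = 0 := by
  rw [polyLaplacian_apply]
  refine Finset.sum_eq_zero fun i _ => ?_
  have h1 : (pderiv i f).IsHomogeneous 0 := by
    have := isHomogeneous_pderiv hf i
    interval_cases n <;> simpa using this
  simp [pderiv_eq_zero_of_isHomogeneous_zero h1 i]

/-- The polynomial `‖x‖² = ∑ xⱼ²`. -/
def rPoly (d : ℕ) : MvPolynomial (Fin d) ℝ := ∑ j : Fin d, X j ^ 2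

lemma isHomogeneous_rPoly (d : ℕ) : (rPoly d).IsHomogeneous 2 :=
  IsHomogeneous.sum _ _ _ fun j _ => isHomogeneous_X_pow j 2

lemma pderiv_rPoly {d : ℕ} (i : Fin d) : pderiv i (rPoly d) = 2 • X i := by
  classical
  rw [rPoly, map_sum, Finset.sum_eq_single i]
  · simp [pderiv_pow, pderiv_X_self]
  · intro j _ hj
    simp [pderiv_pow, pderiv_X_of_ne hj]
  · intro hi; exact absurd (Finset.mem_univ i) hi

lemma polyLaplacian_rPoly_mul {d m : ℕ} {h : MvPolynomial (Fin d) ℝ} (hh : h.IsHomogeneous m) :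
    polyLaplacian d (rPoly d * h) = (2*d + 4*m) • h + rPoly d * polyLaplacian d h := by
  rw [polyLaplacian_apply, polyLaplacian_apply]
  have step : ∀ i : Fin d, pderiv i (pderiv i (rPoly d * h))
      = 2 • h + 4 • (X i * pderiv i h) + rPoly d * pderiv i (pderiv i h) := by
    intro i
    rw [pderiv_mul, pderiv_rPoly, smul_mul_assoc, map_add, map_nsmul, pderiv_mul,
      pderiv_X_self, one_mul, pderiv_mul, pderiv_rPoly, smul_mul_assoc, smul_add]
    module
  rw [Finset.sum_congr rfl fun i _ => step i]
  rw [Finset.sum_add_distrib, Finset.sum_add_distrib, ← Finset.mul_sum,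
    Finset.sum_const, Finset.card_univ, Fintype.card_fin, ← Finset.smul_sum, euler hh,
    smul_smul, smul_smul, ← add_smul, show d*2 + 4*m = 2*d + 4*m by ring]

lemma lap_pow_mul {d n : ℕ} {f : MvPolynomial (Fin d) ℝ} (hf : f.IsHomogeneous n) (j : ℕ) :
    polyLaplacian d (rPoly d ^ (j+1) * f) =
      (2*(j+1)*(d + 2*j + 2*n)) • (rPoly d ^ j * f)
        + rPoly d ^ (j+1) * polyLaplacian d f := by
  induction j with
  | zero =>
    rw [pow_one, pow_zero, one_mul, polyLaplacian_rPoly_mul hf,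
      show 2*(0+1)*(d + 2*0 + 2*n) = 2*d + 4*n by ring]
  | succ j ih =>
    have hpow : (rPoly d ^ (j+1) * f).IsHomogeneous (2*(j+1) + n) :=
      ((isHomogeneous_rPoly d).pow (j+1)).mul hf
    rw [show j + 1 + 1 = (j+1) + 1 from rfl, pow_succ' (rPoly d) (j+1), mul_assoc,
      polyLaplacian_rPoly_mul hpow, ih, mul_add (rPoly d), mul_smul_comm,
      ← mul_assoc, ← pow_succ', ← mul_assoc, ← pow_succ', ← add_assoc, ← add_smul]
    congr 1
    ring

lemma lap_surj_aux {d : ℕ} (hd : 1 ≤ d) (n : ℕ) :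
    ∀ k (f : MvPolynomial (Fin d) ℝ), f.IsHomogeneous n →
      ∃ p : MvPolynomial (Fin d) ℝ, p.IsHomogeneous (n + 2*k + 2) ∧
        polyLaplacian d p = rPoly d ^ k * f := by
  induction n using Nat.strong_induction_on with
  | _ n ih =>
    intro k f hf
    set c : ℕ := 2*(k+1)*(d + 2*k + 2*n) with hc
    have hcpos : 0 < c := by positivity
    have hcne : ((c : ℝ)) ≠ 0 := Nat.cast_ne_zero.mpr hcpos.ne'
    have hpowf : (rPoly d ^ (k+1) * f).IsHomogeneous (n + 2*k + 2) := by
      have := ((isHomogeneous_rPoly d).pow (k+1)).mul hf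
      rwa [show 2*(k+1) + n = n + 2*k + 2 by ring] at this
    rcases lt_or_ge n 2 with hn | hn
    · have hΔ0 : polyLaplacian d f = 0 := polyLaplacian_eq_zero_of_le_one hf (by omega)
      refine ⟨(c : ℝ)⁻¹ • (rPoly d ^ (k+1) * f), ?_, ?_⟩
      · have := hpowf.C_mul ((c : ℝ)⁻¹)
        rwa [C_mul'] at this
      · rw [map_smul, lap_pow_mul hf k, hΔ0, mul_zero, add_zero, ← hc,
          ← Nat.cast_smul_eq_nsmul ℝ, smul_smul, inv_mul_cancel₀ hcne, one_smul]
    · have hΔ : (polyLaplacian d f).IsHomogeneous (n - 2) := isHomogeneous_polyLaplacian hf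
      obtain ⟨q, hq1, hq2⟩ := ih (n - 2) (by omega) (k+1) _ hΔ
      have hq1' : q.IsHomogeneous (n + 2*k + 2) := by
        rwa [show n - 2 + 2*(k+1) + 2 = n + 2*k + 2 by omega] at hq1
      refine ⟨(c : ℝ)⁻¹ • (rPoly d ^ (k+1) * f - q), ?_, ?_⟩
      · have := (hpowf.sub hq1').C_mul ((c : ℝ)⁻¹)
        rwa [C_mul'] at this
      · rw [map_smul, map_sub, lap_pow_mul hf k, hq2, ← hc, add_sub_cancel_right,
          ← Nat.cast_smul_eq_nsmul ℝ, smul_smul, inv_mul_cancel₀ hcne, one_smul]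

lemma degree_eq_sum_id {d : ℕ} (s : Fin d →₀ ℕ) : s.degree = s.sum fun _ => id := rfl

/-- Monomial exponents of total degree `n` correspond to multisets of size `n`. -/
def degreeSetEquivSym (d n : ℕ) :
    ↥{s : Fin d →₀ ℕ | s.degree = n} ≃ Sym (Fin d) n where
  toFun s := ⟨Finsupp.toMultiset s.1, by
    have h2 : s.1.degree = n := s.2
    rw [Finsupp.card_toMultiset, ← degree_eq_sum_id, h2]⟩
  invFun m := ⟨Multiset.toFinsupp m.1, by
    show (Multiset.toFinsupp m.1).degree = n
    rw [degree_eq_sum_id, Multiset.toFinsupp_sum_eq, m.2]⟩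
  left_inv s := by
    ext : 1
    exact Finsupp.toMultiset_toFinsupp s.1
  right_inv m := Subtype.ext (Multiset.toFinsupp_toMultiset m.1)

lemma finrank_homogeneousSubmodule (d n : ℕ) :
    Module.finrank ℝ (homogeneousSubmodule (Fin d) ℝ n) = (d + n - 1).choose n := by
  have heq : homogeneousSubmodule (Fin d) ℝ n
      = MvPolynomial.restrictSupport ℝ {s : Fin d →₀ ℕ | s.degree = n} :=
    homogeneousSubmodule_eq_finsupp_supported (Fin d) ℝ n
  rw [heq]
  have b := MvPolynomial.basisRestrictSupport ℝ {s : Fin d →₀ ℕ | s.degree = n}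
  have : Fintype {s : Fin d →₀ ℕ | s.degree = n} :=
    Fintype.ofEquiv _ (degreeSetEquivSym d n).symm
  rw [Module.finrank_eq_card_basis b, Fintype.card_congr (degreeSetEquivSym d n),
    Sym.card_sym_eq_choose, Fintype.card_fin]

lemma finiteDimensional_homogeneousSubmodule (d n : ℕ) :
    FiniteDimensional ℝ (homogeneousSubmodule (Fin d) ℝ n) := by
  rw [homogeneousSubmodule_eq_finsupp_supported (Fin d) ℝ n]
  have : Fintype {s : Fin d →₀ ℕ | s.degree = n} :=
    Fintype.ofEquiv _ (degreeSetEquivSym d n).symm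
  exact Module.Finite.of_basis
    (MvPolynomial.basisRestrictSupport ℝ {s : Fin d →₀ ℕ | s.degree = n})

end Aux

set_option maxHeartbeats 1000000 in
set_option synthInstance.maxHeartbeats 400000 in
/-- For `d ≥ 1` and `ℓ ≥ 0`, the real vector space of harmonic homogeneous
polynomials of degree `ℓ` in `d` variables has dimension
`N(d,ℓ) = C(d+ℓ−1, ℓ) − C(d+ℓ−3, ℓ−2)`, the second binomial coefficient being interpreted
as `0` when `ℓ < 2`. -/
theorem finrank_harmonicHomogeneous (d ℓ : ℕ) (hd : 1 ≤ d) :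
    Module.finrank ℝ (harmonicHomogeneous d ℓ) =
      Nat.choose (d + ℓ - 1) ℓ - (if 2 ≤ ℓ then Nat.choose (d + ℓ - 3) (ℓ - 2) else 0) := by
  by_cases hl : 2 ≤ ℓ
  · rw [if_pos hl]
    have _i1 := finiteDimensional_homogeneousSubmodule d ℓ
    have _i2 := finiteDimensional_homogeneousSubmodule d (ℓ - 2)
    have hmaps : ∀ x ∈ homogeneousSubmodule (Fin d) ℝ ℓ,
        polyLaplacian d x ∈ homogeneousSubmodule (Fin d) ℝ (ℓ - 2) :=
      fun x hx => isHomogeneous_polyLaplacian hx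
    set L := (polyLaplacian d).restrict hmaps with hL
    have hsurj : LinearMap.range L = ⊤ := by
      rw [LinearMap.range_eq_top]
      rintro ⟨q, hq⟩
      obtain ⟨p, hp1, hp2⟩ := lap_surj_aux hd (ℓ - 2) 0 q hq
      have hp1' : p.IsHomogeneous ℓ := by
        rwa [show ℓ - 2 + 2*0 + 2 = ℓ by omega] at hp1
      refine ⟨⟨p, hp1'⟩, Subtype.ext ?_⟩
      rw [hL, LinearMap.restrict_apply]
      rw [pow_zero, one_mul] at hp2
      exact hp2
    have hker : LinearMap.ker L
        = Submodule.comap (homogeneousSubmodule (Fin d) ℝ ℓ).subtype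
            (harmonicHomogeneous d ℓ) := by
      rw [hL, LinearMap.ker_restrict hmaps, harmonicHomogeneous]
      ext x
      simp [Submodule.mem_comap, x.2]
    have hfr : Module.finrank ℝ (harmonicHomogeneous d ℓ)
        = Module.finrank ℝ (LinearMap.ker L) := by
      rw [hker]
      exact (LinearEquiv.finrank_eq
        (Submodule.comapSubtypeEquivOfLe (inf_le_left : harmonicHomogeneous d ℓ ≤ _))).symm
    have hrn := LinearMap.finrank_range_add_finrank_ker L
    rw [hsurj, finrank_top] at hrn
    rw [hfr, finrank_homogeneousSubmodule, finrank_homogeneousSubmodule] at *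
    rw [show d + (ℓ - 2) - 1 = d + ℓ - 3 by omega] at hrn
    omega
  · rw [if_neg hl, Nat.sub_zero]
    have hle : homogeneousSubmodule (Fin d) ℝ ℓ ≤ LinearMap.ker (polyLaplacian d) :=
      fun f hf => polyLaplacian_eq_zero_of_le_one hf (by omega)
    rw [harmonicHomogeneous, inf_eq_left.mpr hle, finrank_homogeneousSubmodule]
end
end

section
/- Let d ≥ 1 and let P be a homogeneous polynomial of degree k ≥ 0 in d real variables. Then there exist harmonic homogeneous polynomials P_0, P_1, …, P_{⌊k/2⌋}, with P_j homogeneous of degree k − 2j, such that P(x) = ∑_{j=0}^{⌊k/2⌋} |x|^{2j} P_j(x) for all x ∈ ℝ^d, where |x|² = x_1² + ⋯ + x_d². -/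
open MvPolynomial

noncomputable section

namespace HarmonicDecompAux

variable {d : ℕ}

/-- The squared-norm polynomial `|x|² = ∑ xᵢ²`. -/
def r2 (d : ℕ) : MvPolynomial (Fin d) ℝ := ∑ i, X i ^ 2

/-- The Laplacian on polynomials. -/
def lap (p : MvPolynomial (Fin d) ℝ) : MvPolynomial (Fin d) ℝ :=
  ∑ i, pderiv i (pderiv i p)

lemma lap_smul (c : ℝ) (p : MvPolynomial (Fin d) ℝ) : lap (c • p) = c • lap p := by
  simp [lap, Finset.smul_sum]

lemma lap_sub (p q : MvPolynomial (Fin d) ℝ) : lap (p - q) = lap p - lap q := by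
  simp [lap, Finset.sum_sub_distrib]

lemma r2_isHomogeneous : (r2 d).IsHomogeneous 2 := by
  apply MvPolynomial.IsHomogeneous.sum
  intro i _
  simpa using (isHomogeneous_X ℝ i).pow 2

lemma degree_eq_sum (s : Fin d →₀ ℕ) : s.degree = ∑ i : Fin d, s i := by
  rw [Finsupp.degree]
  exact Finset.sum_subset (Finset.subset_univ _)
    (fun i _ h => Finsupp.notMem_support_iff.mp h)

lemma X_mul_pderiv_monomial (i : Fin d) (s : Fin d →₀ ℕ) (a : ℝ) :
    X i * pderiv i (monomial s a) = (s i) • monomial s a := by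
  rw [pderiv_monomial]
  rcases Nat.eq_zero_or_pos (s i) with h | h
  · simp [h]
  · have hle : Finsupp.single i 1 ≤ s := by rwa [Finsupp.single_le_iff]
    rw [X, monomial_mul, one_mul, add_tsub_cancel_of_le hle, smul_monomial]
    congr 1
    push_cast
    ring

/-- Euler's identity for homogeneous polynomials. -/
lemma euler {n : ℕ} {P : MvPolynomial (Fin d) ℝ} (hP : P.IsHomogeneous n) :
    ∑ i : Fin d, X i * pderiv i P = (n : ℝ) • P := by
  have key : ∀ v ∈ P.support, ∑ i : Fin d, X i * pderiv i (monomial v (coeff v P))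
      = (n : ℝ) • monomial v (coeff v P) := by
    intro v hv
    have hdeg : v.degree = n := by
      have := hP (mem_support_iff.mp hv)
      rwa [Finsupp.degree_eq_weight_one]
    calc ∑ i : Fin d, X i * pderiv i (monomial v (coeff v P))
        = ∑ i : Fin d, (v i) • monomial v (coeff v P) := by
          exact Finset.sum_congr rfl fun i _ => X_mul_pderiv_monomial i v _
      _ = (∑ i : Fin d, v i) • monomial v (coeff v P) := by rw [Finset.sum_smul]
      _ = (n : ℝ) • monomial v (coeff v P) := by
          rw [← degree_eq_sum, hdeg, Nat.cast_smul_eq_nsmul]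
  calc ∑ i : Fin d, X i * pderiv i P
      = ∑ i : Fin d, ∑ v ∈ P.support, X i * pderiv i (monomial v (coeff v P)) := by
        conv_lhs => rw [P.as_sum]
        simp only [map_sum, Finset.mul_sum]
    _ = ∑ v ∈ P.support, ∑ i : Fin d, X i * pderiv i (monomial v (coeff v P)) :=
        Finset.sum_comm
    _ = ∑ v ∈ P.support, (n : ℝ) • monomial v (coeff v P) := Finset.sum_congr rfl key
    _ = (n : ℝ) • P := by rw [← Finset.smul_sum, ← P.as_sum]

lemma smul' {n : ℕ} {P : MvPolynomial (Fin d) ℝ} (c : ℝ) (h : P.IsHomogeneous n) :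
    (c • P).IsHomogeneous n := by
  rw [← mem_homogeneousSubmodule] at h ⊢
  exact Submodule.smul_mem _ _ h

lemma pderiv' {n : ℕ} {P : MvPolynomial (Fin d) ℝ} (hP : P.IsHomogeneous n) (i : Fin d) :
    (pderiv i P).IsHomogeneous (n - 1) := by
  rw [← mem_homogeneousSubmodule, P.as_sum, map_sum]
  apply Submodule.sum_mem
  intro v hv
  rw [pderiv_monomial, mem_homogeneousSubmodule]
  rcases Nat.eq_zero_or_pos (v i) with h | h
  · rw [h]
    simpa using isHomogeneous_zero (Fin d) ℝ (n - 1)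
  · apply isHomogeneous_monomial
    have hvd : v.degree = n := by
      have := hP (mem_support_iff.mp hv)
      rwa [Finsupp.degree_eq_weight_one]
    rw [degree_eq_sum] at hvd ⊢
    have hsplit : ∀ w : Fin d →₀ ℕ,
        ∑ j : Fin d, w j = ∑ j ∈ Finset.univ.erase i, w j + w i := by
      intro w
      rw [Finset.sum_erase_add _ _ (Finset.mem_univ i)]
    have he : ∑ j ∈ Finset.univ.erase i, ((v - Finsupp.single i 1 : Fin d →₀ ℕ) : Fin d → ℕ) j
        = ∑ j ∈ Finset.univ.erase i, v j := by
      refine Finset.sum_congr rfl fun j hj => ?_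
      rw [Finsupp.tsub_apply, Finsupp.single_apply,
        if_neg (Ne.symm (Finset.ne_of_mem_erase hj)), tsub_zero]
    have hi2 : ((v - Finsupp.single i 1 : Fin d →₀ ℕ) : Fin d → ℕ) i = v i - 1 := by
      rw [Finsupp.tsub_apply, Finsupp.single_eq_same]
    rw [hsplit, he, hi2]
    rw [hsplit v] at hvd
    omega

lemma pderiv_eq_zero_of_isHomogeneous_zero {P : MvPolynomial (Fin d) ℝ}
    (hP : P.IsHomogeneous 0) (i : Fin d) : pderiv i P = 0 := by
  rw [P.as_sum, map_sum]
  apply Finset.sum_eq_zero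
  intro v hv
  have hvd : v.degree = 0 := by
    have := hP (mem_support_iff.mp hv)
    rwa [Finsupp.degree_eq_weight_one]
  have hv0 : v = 0 := (Finsupp.degree_eq_zero_iff v).mp hvd
  subst hv0
  simp [pderiv_monomial]

lemma lap_eq_zero {m : ℕ} (hm : m ≤ 1) {P : MvPolynomial (Fin d) ℝ}
    (hP : P.IsHomogeneous m) : lap P = 0 := by
  apply Finset.sum_eq_zero
  intro i _
  interval_cases m
  · rw [pderiv_eq_zero_of_isHomogeneous_zero hP i, map_zero]
  · exact pderiv_eq_zero_of_isHomogeneous_zero (pderiv' hP i) i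

lemma lap_isHomogeneous {m : ℕ} {P : MvPolynomial (Fin d) ℝ}
    (hP : P.IsHomogeneous m) : (lap P).IsHomogeneous (m - 2) := by
  apply MvPolynomial.IsHomogeneous.sum
  intro i _
  have := pderiv' (pderiv' hP i) i
  rwa [Nat.sub_sub] at this

lemma pderiv_r2 (i : Fin d) : pderiv i (r2 d) = C 2 * X i := by
  rw [r2, map_sum, Finset.sum_eq_single i]
  · rw [pderiv_pow, pderiv_X_self, mul_one]
    norm_num
    rw [map_ofNat]
  · intro j _ hj
    rw [pderiv_pow, pderiv_X_of_ne hj, mul_zero]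
  · intro h
    exact absurd (Finset.mem_univ i) h

lemma lap_r2_mul {m : ℕ} {Q : MvPolynomial (Fin d) ℝ} (hQ : Q.IsHomogeneous m) :
    lap (r2 d * Q) = C ((2 * d + 4 * m : ℕ) : ℝ) * Q + r2 d * lap Q := by
  have h1 : ∀ i : Fin d, pderiv i (pderiv i (r2 d * Q)) =
      C 2 * Q + C 4 * (X i * pderiv i Q) + r2 d * pderiv i (pderiv i Q) := by
    intro i
    simp only [map_add, pderiv_mul, pderiv_r2, pderiv_C, pderiv_X_self]
    rw [show (C 2 : MvPolynomial (Fin d) ℝ) = 2 from map_ofNat C 2,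
      show (C 4 : MvPolynomial (Fin d) ℝ) = 4 from map_ofNat C 4]
    ring
  rw [lap]
  calc ∑ i : Fin d, pderiv i (pderiv i (r2 d * Q))
      = ∑ i : Fin d, (C 2 * Q + C 4 * (X i * pderiv i Q) + r2 d * pderiv i (pderiv i Q)) :=
        Finset.sum_congr rfl fun i _ => h1 i
    _ = (d : ℕ) • (C 2 * Q) + C 4 * (∑ i : Fin d, X i * pderiv i Q) + r2 d * lap Q := by
        rw [Finset.sum_add_distrib, Finset.sum_add_distrib, Finset.sum_const,
          Finset.card_univ, Fintype.card_fin, ← Finset.mul_sum, ← Finset.mul_sum]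
        rfl
    _ = C ((2 * d + 4 * m : ℕ) : ℝ) * Q + r2 d * lap Q := by
        rw [euler hQ, ← Nat.cast_smul_eq_nsmul ℝ, MvPolynomial.smul_eq_C_mul,
          MvPolynomial.smul_eq_C_mul, ← mul_assoc, ← mul_assoc, ← C_mul, ← C_mul,
          ← add_mul, ← C_add]
        congr 2
        push_cast
        ring

lemma solve (hd : 1 ≤ d) : ∀ m : ℕ, ∀ lam : ℝ, 0 ≤ lam → ∀ R : MvPolynomial (Fin d) ℝ,
    R.IsHomogeneous m → ∃ Q : MvPolynomial (Fin d) ℝ, Q.IsHomogeneous m ∧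
      lam • Q + lap (r2 d * Q) = R := by
  intro m
  induction m using Nat.strong_induction_on with
  | _ m ih =>
    intro lam hlam R hR
    set c : ℝ := ((2 * d + 4 * m : ℕ) : ℝ) with hc
    have hcpos : 0 < c := by
      rw [hc]
      exact_mod_cast Nat.pos_of_ne_zero (by omega)
    have hmupos : 0 < lam + c := by linarith
    have hmu : lam + c ≠ 0 := ne_of_gt hmupos
    by_cases hm : m ≤ 1
    · refine ⟨(lam + c)⁻¹ • R, smul' _ hR, ?_⟩
      rw [lap_r2_mul (smul' _ hR), lap_smul, lap_eq_zero hm hR, smul_zero, mul_zero,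
        add_zero, ← MvPolynomial.smul_eq_C_mul, ← add_smul, smul_smul,
        mul_inv_cancel₀ hmu, one_smul]
    · push_neg at hm
      obtain ⟨W, hW, hWeq⟩ := ih (m - 2) (by omega) (lam + c) (le_of_lt hmupos)
        (lap R) (lap_isHomogeneous hR)
      have hr2W : (r2 d * W).IsHomogeneous m := by
        have h := r2_isHomogeneous.mul hW
        have h2 : 2 + (m - 2) = m := by omega
        rwa [h2] at h
      set Q := (lam + c)⁻¹ • (R - r2 d * W) with hQdef
      have hQhom : Q.IsHomogeneous m := smul' _ (hR.sub hr2W)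
      refine ⟨Q, hQhom, ?_⟩
      have hlapQ : lap Q = W := by
        rw [hQdef, lap_smul, lap_sub]
        have h : lap R - lap (r2 d * W) = (lam + c) • W := by
          rw [← hWeq]
          abel
        rw [h, smul_smul, inv_mul_cancel₀ hmu, one_smul]
      rw [lap_r2_mul hQhom, hlapQ, ← hc, ← MvPolynomial.smul_eq_C_mul, ← add_assoc,
        ← add_smul, hQdef, smul_smul, mul_inv_cancel₀ hmu, one_smul, sub_add_cancel]

lemma decomp (hd : 1 ≤ d) : ∀ k : ℕ, ∀ P : MvPolynomial (Fin d) ℝ, P.IsHomogeneous k →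
    ∃ Q : ℕ → MvPolynomial (Fin d) ℝ,
      (∀ j, j ≤ k / 2 → (Q j).IsHomogeneous (k - 2 * j) ∧ lap (Q j) = 0) ∧
      P = ∑ j ∈ Finset.range (k / 2 + 1), (r2 d) ^ j * Q j := by
  intro k
  induction k using Nat.strong_induction_on with
  | _ k ih =>
    intro P hP
    by_cases hk : k ≤ 1
    · refine ⟨fun j => if j = 0 then P else 0, ?_, ?_⟩
      · intro j hj
        have hj0 : j = 0 := by omega
        subst hj0
        simp only [if_pos rfl]
        exact ⟨by simpa using hP, lap_eq_zero hk hP⟩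
      · have h0 : k / 2 = 0 := by omega
        simp [h0]
    · push_neg at hk
      obtain ⟨W, hW, hWeq⟩ := solve hd (k - 2) 0 le_rfl (lap P) (lap_isHomogeneous hP)
      rw [zero_smul, zero_add] at hWeq
      have hr2W : (r2 d * W).IsHomogeneous k := by
        have h := r2_isHomogeneous.mul hW
        have h2 : 2 + (k - 2) = k := by omega
        rwa [h2] at h
      set H := P - r2 d * W with hH
      have hHhom : H.IsHomogeneous k := hP.sub hr2W
      have hHlap : lap H = 0 := by rw [hH, lap_sub, hWeq, sub_self]
      obtain ⟨Q', hQ'1, hQ'2⟩ := ih (k - 2) (by omega) W hW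
      refine ⟨fun j => Nat.rec H (fun i _ => Q' i) j, ?_, ?_⟩
      · intro j hj
        match j, hj with
        | 0, _ => exact ⟨by simpa using hHhom, hHlap⟩
        | (i+1), hj =>
          have hi : i ≤ (k - 2) / 2 := by omega
          obtain ⟨h1, h2⟩ := hQ'1 i hi
          refine ⟨?_, h2⟩
          have heq : (k - 2) - 2 * i = k - 2 * (i + 1) := by omega
          rwa [heq] at h1
      · rw [Finset.sum_range_succ']
        have hk2 : k / 2 = (k - 2) / 2 + 1 := by omega
        simp only [pow_zero, one_mul]
        rw [hk2]
        have hsum : ∑ i ∈ Finset.range ((k - 2) / 2 + 1),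
              r2 d ^ (i + 1) * (Nat.rec H (fun i _ => Q' i) (i + 1) : MvPolynomial (Fin d) ℝ)
            = r2 d * ∑ i ∈ Finset.range ((k - 2) / 2 + 1), r2 d ^ i * Q' i := by
          rw [Finset.mul_sum]
          exact Finset.sum_congr rfl fun i _ => by ring
        rw [hsum, ← hQ'2]
        show P = r2 d * W + H
        rw [hH]
        ring

end HarmonicDecompAux

/-- Every homogeneous polynomial `P` of degree `k` in `d` real variables
decomposes as `P(x) = ∑_{j=0}^{⌊k/2⌋} |x|^{2j} P_j(x)`, where each `P_j` is a harmonic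
homogeneous polynomial of degree `k − 2j`. -/
theorem homogeneous_poly_harmonic_decomposition (d k : ℕ) (hd : 1 ≤ d)
    (P : MvPolynomial (Fin d) ℝ) (hP : P.IsHomogeneous k) :
    ∃ Q : ℕ → MvPolynomial (Fin d) ℝ,
      (∀ j, j ≤ k / 2 → (Q j).IsHomogeneous (k - 2 * j) ∧
        ∑ i : Fin d, pderiv i (pderiv i (Q j)) = 0) ∧
      ∀ x : Fin d → ℝ,
        MvPolynomial.eval x P =
          ∑ j ∈ Finset.range (k / 2 + 1),
            (∑ i, x i ^ 2) ^ j * MvPolynomial.eval x (Q j) := by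
  obtain ⟨Q, h1, h2⟩ := HarmonicDecompAux.decomp hd k P hP
  refine ⟨Q, h1, fun x => ?_⟩
  rw [h2, map_sum]
  refine Finset.sum_congr rfl fun j _ => ?_
  rw [map_mul, map_pow]
  congr 2
  simp [HarmonicDecompAux.r2]
end
end
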